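/- Let G be an edge-weighted graph and P = u v_1 … v_{ℓ-1} v a maximal path (all internal vertices have degree 2 in G; endpoints u, v do not; ℓ ≥ 3). Let G' be obtained from G by deleting the internal vertices of P, adding a new vertex z with edges uz of weight ω(P-v) - ω(P-u-v) and vz of weight ω(P-u) - ω(P-u-v), and setting the weight of edge uv to max{ω(uv), ω(P) - ω(P-u-v)} (taking ω(uv) = 0 if uv ∉ E, and adding the edge uv). Then ω(G') = ω(G) - ω(P-u-v). -/

import Mathlib

/-!
A matching of `G` splits into the edges at internal vertices of `P`, which are edges of `P`
because those vertices have degree two, and the remaining edges, which survive in `G'`. The first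
part is a matching of `P` minus the endpoints it leaves uncovered, so its weight exceeds
`ω(P-u-v)` by at most the weight of `uv`, `uz`, `vz` or nothing, according to which endpoints it
covers. Conversely, a matching of `G'` uses at most one of `uz`, `vz`, `uv`, since any two of them
meet, and that edge can be traded for a matching of `P` (or the `G`-edge `uv` together with a
matching of `P-u-v`) of weight `ω(P-u-v)` more that covers no further vertex outside `P`.
-/

/-- A matching in a simple graph `G`, given as a finite set of edges of `G`
that are pairwise vertex-disjoint. -/
def IsMatching {V : Type*} (G : SimpleGraph V) (M : Finset (Sym2 V)) : Prop :=
  (∀ e ∈ M, e ∈ G.edgeSet) ∧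
    ∀ e ∈ M, ∀ f ∈ M, e ≠ f → ∀ v, v ∈ e → v ∉ f

/-- The maximum weight of a matching in `G` with edge weights `w`. -/
noncomputable def wmax {V : Type*} (G : SimpleGraph V) (w : Sym2 V → ℕ) : ℕ :=
  sSup {n | ∃ M : Finset (Sym2 V), IsMatching G M ∧ ∑ e ∈ M, w e = n}

/-- The graph obtained from `G` by deleting the vertices in `S`. -/
def deleteVerts {V : Type*} (G : SimpleGraph V) (S : Set V) : SimpleGraph V where
  Adj a b := G.Adj a b ∧ a ∉ S ∧ b ∉ S
  symm := ⟨fun _ _ ⟨h, ha, hb⟩ => ⟨h.symm, hb, ha⟩⟩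
  loopless := ⟨fun a ⟨h, _, _⟩ => G.loopless.irrefl a h⟩

/-- The path graph on the vertices `p 0, p 1, …, p ℓ`. -/
def pathOn {V : Type*} (ℓ : ℕ) (p : ℕ → V) : SimpleGraph V :=
  SimpleGraph.fromEdgeSet {e | ∃ i < ℓ, e = s(p i, p (i + 1))}

/-- The graph obtained from `G` by removing all internal vertices of the path
`p 0, …, p ℓ`, adding a fresh vertex `z` (`none`) joined to the endpoints
`u = p 0` and `v = p ℓ`, and adding the edge `uv`. -/
def pathReduced {V : Type*} (G : SimpleGraph V) (ℓ : ℕ) (p : ℕ → V) :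
    SimpleGraph (Option V) where
  Adj a b :=
    match a, b with
    | some a, some b => a ≠ b ∧ (∀ i, 0 < i → i < ℓ → p i ≠ a) ∧
        (∀ i, 0 < i → i < ℓ → p i ≠ b) ∧
        (G.Adj a b ∨ (a = p 0 ∧ b = p ℓ) ∨ (a = p ℓ ∧ b = p 0))
    | some a, none => a = p 0 ∨ a = p ℓ
    | none, some b => b = p 0 ∨ b = p ℓ
    | none, none => False
  symm := by
    constructor
    rintro (_ | a) (_ | b) h
    · exact h.elim
    · exact h
    · exact h
    · obtain ⟨h1, h2, h3, h4⟩ := h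
      refine ⟨h1.symm, h3, h2, ?_⟩
      rcases h4 with h4 | ⟨ha, hb⟩ | ⟨ha, hb⟩
      · exact Or.inl h4.symm
      · exact Or.inr (Or.inr ⟨hb, ha⟩)
      · exact Or.inr (Or.inl ⟨hb, ha⟩)
  loopless := by
    constructor
    rintro (_ | a) h
    · exact h.elim
    · exact h.1 rfl

section Matching

variable {V W : Type*}

def edgeVerts (M : Finset (Sym2 V)) : Set V := {x | ∃ e ∈ M, x ∈ e}

@[simp] lemma edgeVerts_empty : edgeVerts (∅ : Finset (Sym2 V)) = ∅ := by
  simp [edgeVerts]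

@[simp] lemma edgeVerts_singleton (a b : V) : edgeVerts {s(a, b)} = {a, b} := by
  ext; simp [edgeVerts]

lemma edgeVerts_image [DecidableEq W] (f : V → W) (M : Finset (Sym2 V)) :
    edgeVerts (M.image (Sym2.map f)) = f '' edgeVerts M := by
  ext y
  simp only [edgeVerts, Finset.mem_image, Set.mem_ofPred_eq, Set.mem_image]
  constructor
  · rintro ⟨_, ⟨e, he, rfl⟩, hy⟩
    obtain ⟨x, hx, rfl⟩ := Sym2.mem_map.1 hy
    exact ⟨x, ⟨e, he, hx⟩, rfl⟩
  · rintro ⟨x, ⟨e, he, hx⟩, rfl⟩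
    exact ⟨_, ⟨e, he, rfl⟩, Sym2.mem_map.2 ⟨x, hx, rfl⟩⟩

lemma disjoint_of_disjoint_edgeVerts {A B : Finset (Sym2 V)}
    (h : Disjoint (edgeVerts A) (edgeVerts B)) : Disjoint A B :=
  Finset.disjoint_left.2 fun {e} hA hB =>
    Set.disjoint_left.1 h ⟨e, hA, e.out_fst_mem⟩ ⟨e, hB, e.out_fst_mem⟩

variable {G : SimpleGraph V} {H : SimpleGraph W} {M A B : Finset (Sym2 V)}

lemma isMatching_empty (G : SimpleGraph V) : IsMatching G ∅ := by
  simp [IsMatching]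

lemma IsMatching.singleton {e : Sym2 V} (h : e ∈ G.edgeSet) : IsMatching G {e} :=
  ⟨by simpa using h, by simp⟩

lemma IsMatching.subset (hM : IsMatching G M) (hA : A ⊆ M) : IsMatching G A :=
  ⟨fun e he => hM.1 e (hA he), fun e he f hf => hM.2 e (hA he) f (hA hf)⟩

lemma IsMatching.mono {G' : SimpleGraph V} (hGG' : G ≤ G') (hM : IsMatching G M) :
    IsMatching G' M :=
  ⟨fun e he => SimpleGraph.edgeSet_mono hGG' (hM.1 e he), hM.2⟩

lemma IsMatching.disjoint_edgeVerts (hM : IsMatching G M) (hA : A ⊆ M) (hB : B ⊆ M)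
    (hAB : Disjoint A B) : Disjoint (edgeVerts A) (edgeVerts B) :=
  Set.disjoint_left.2 fun x ⟨e, he, hxe⟩ ⟨f, hf, hxf⟩ =>
    hM.2 e (hA he) f (hB hf) (fun h => Finset.disjoint_left.1 hAB he (h ▸ hf)) x hxe hxf

lemma IsMatching.union [DecidableEq V] (hA : IsMatching G A) (hB : IsMatching G B)
    (hAB : Disjoint (edgeVerts A) (edgeVerts B)) : IsMatching G (A ∪ B) := by
  refine ⟨fun e he => (Finset.mem_union.1 he).elim (hA.1 e) (hB.1 e),
    fun e he f hf hne x hxe hxf => ?_⟩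
  rcases Finset.mem_union.1 he with he | he <;> rcases Finset.mem_union.1 hf with hf | hf
  · exact hA.2 e he f hf hne x hxe hxf
  · exact Set.disjoint_left.1 hAB ⟨e, he, hxe⟩ ⟨f, hf, hxf⟩
  · exact Set.disjoint_left.1 hAB ⟨f, hf, hxf⟩ ⟨e, he, hxe⟩
  · exact hB.2 e he f hf hne x hxe hxf

lemma IsMatching.image [DecidableEq W] {f : V → W} (hf : Function.Injective f)
    (hM : IsMatching G M) (hH : ∀ e ∈ M, e.map f ∈ H.edgeSet) :
    IsMatching H (M.image (Sym2.map f)) := by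
  refine ⟨fun d hd => ?_, fun d₁ hd₁ d₂ hd₂ hne y hy₁ hy₂ => ?_⟩
  · obtain ⟨e, he, rfl⟩ := Finset.mem_image.1 hd
    exact hH e he
  · obtain ⟨e₁, he₁, rfl⟩ := Finset.mem_image.1 hd₁
    obtain ⟨e₂, he₂, rfl⟩ := Finset.mem_image.1 hd₂
    obtain ⟨x, hx₁, rfl⟩ := Sym2.mem_map.1 hy₁
    obtain ⟨x', hx₂, hxx'⟩ := Sym2.mem_map.1 hy₂
    rw [hf hxx'] at hx₂
    exact hM.2 e₁ he₁ e₂ he₂ (fun h => hne (h ▸ rfl)) x hx₁ hx₂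

lemma IsMatching.preimage {f : V → W} (hf : Function.Injective f) {M : Finset (Sym2 W)}
    (hM : IsMatching H M) (hG : ∀ e, e.map f ∈ M → e ∈ G.edgeSet) :
    IsMatching G (M.preimage (Sym2.map f) (Sym2.map.injective hf).injOn) := by
  refine ⟨fun e he => hG e (Finset.mem_preimage.1 he), fun e he e' he' hne x hx hx' => ?_⟩
  exact hM.2 _ (Finset.mem_preimage.1 he) _ (Finset.mem_preimage.1 he')
    (fun h => hne (Sym2.map.injective hf h)) (f x)
    (Sym2.mem_map.2 ⟨x, hx, rfl⟩) (Sym2.mem_map.2 ⟨x, hx', rfl⟩)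

lemma deleteVerts_le (G : SimpleGraph V) (S : Set V) : deleteVerts G S ≤ G :=
  fun _ _ h => h.1

lemma deleteVerts_anti (G : SimpleGraph V) {S T : Set V} (hST : S ⊆ T) :
    deleteVerts G T ≤ deleteVerts G S :=
  fun _ _ h => ⟨h.1, fun hs => h.2.1 (hST hs), fun hs => h.2.2 (hST hs)⟩

lemma IsMatching.deleteVerts {S : Set V} (hM : IsMatching G M)
    (hS : Disjoint (edgeVerts M) S) : IsMatching (_root_.deleteVerts G S) M := by
  refine ⟨fun e he => ?_, hM.2⟩
  induction e using Sym2.ind with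
  | _ a b =>
    exact ⟨hM.1 _ he, Set.disjoint_left.1 hS ⟨_, he, Sym2.mem_mk_left a b⟩,
      Set.disjoint_left.1 hS ⟨_, he, Sym2.mem_mk_right a b⟩⟩

lemma IsMatching.disjoint_of_deleteVerts {S : Set V}
    (hM : IsMatching (_root_.deleteVerts G S) M) :
    Disjoint (edgeVerts M) S := by
  refine Set.disjoint_left.2 fun x ⟨e, he, hxe⟩ => ?_
  have hadj := hM.1 e he
  induction e using Sym2.ind with
  | _ a b =>
    rcases Sym2.mem_iff.1 hxe with rfl | rfl
    exacts [hadj.2.1, hadj.2.2]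

end Matching

section MaxWeight

variable {V : Type*} [Fintype V] {G : SimpleGraph V} {w : Sym2 V → ℕ}

lemma bddAbove_matchingWeights (G : SimpleGraph V) (w : Sym2 V → ℕ) :
    BddAbove {n | ∃ M : Finset (Sym2 V), IsMatching G M ∧ ∑ e ∈ M, w e = n} := by
  refine ⟨∑ e, w e, ?_⟩
  rintro n ⟨M, -, rfl⟩
  exact Finset.sum_le_sum_of_subset (Finset.subset_univ M)

lemma le_wmax {M : Finset (Sym2 V)} (hM : IsMatching G M) : ∑ e ∈ M, w e ≤ wmax G w :=
  le_csSup (bddAbove_matchingWeights G w) ⟨M, hM, rfl⟩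

lemma exists_wmax (G : SimpleGraph V) (w : Sym2 V → ℕ) :
    ∃ M, IsMatching G M ∧ ∑ e ∈ M, w e = wmax G w :=
  Nat.sSup_mem (s := {n | ∃ M : Finset (Sym2 V), IsMatching G M ∧ ∑ e ∈ M, w e = n})
    ⟨0, ∅, isMatching_empty G, rfl⟩ (bddAbove_matchingWeights G w)

lemma wmax_mono {G' : SimpleGraph V} (hGG' : G ≤ G') : wmax G w ≤ wmax G' w := by
  obtain ⟨M, hM, hMw⟩ := exists_wmax G w
  exact hMw ▸ le_wmax (hM.mono hGG')

end MaxWeight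

section Path

variable {V : Type*} {ℓ : ℕ} {p : ℕ → V}

lemma pathOn_adj {a b : V} :
    (pathOn ℓ p).Adj a b ↔ (∃ i < ℓ, s(a, b) = s(p i, p (i + 1))) ∧ a ≠ b := by
  simp [pathOn]

lemma edgeVerts_subset_of_isMatching_pathOn {N : Finset (Sym2 V)}
    (hN : IsMatching (pathOn ℓ p) N) : edgeVerts N ⊆ p '' Set.Iic ℓ := by
  rintro x ⟨e, he, hxe⟩
  have hadj := hN.1 e he
  induction e using Sym2.ind with
  | _ a b =>
    obtain ⟨⟨i, hi, heq⟩, -⟩ := pathOn_adj.1 hadj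
    rw [heq, Sym2.mem_iff] at hxe
    rcases hxe with rfl | rfl
    exacts [⟨i, by simp; omega, rfl⟩, ⟨i + 1, by simp; omega, rfl⟩]

lemma mem_interior_or_eq_endpoint_of_isMatching_pathOn {N : Finset (Sym2 V)}
    (hN : IsMatching (pathOn ℓ p) N) {x : V} (hx : x ∈ edgeVerts N) :
    x ∈ p '' Set.Ioo 0 ℓ ∨ x = p 0 ∨ x = p ℓ := by
  obtain ⟨i, hi, rfl⟩ := edgeVerts_subset_of_isMatching_pathOn hN hx
  rcases Nat.eq_zero_or_pos i with rfl | hi0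
  · exact Or.inr (Or.inl rfl)
  rcases (Set.mem_Iic.1 hi).eq_or_lt with rfl | hiℓ
  · exact Or.inr (Or.inr rfl)
  · exact Or.inl ⟨i, ⟨hi0, hiℓ⟩, rfl⟩

end Path

/-- `p 0, …, p ℓ` is a path of `G` all of whose internal vertices have degree two. -/
structure IsThreadPath {V : Type*} [Fintype V] (G : SimpleGraph V) [DecidableRel G.Adj]
    (ℓ : ℕ) (p : ℕ → V) : Prop where
  pos : 0 < ℓ
  injOn : Set.InjOn p (Set.Iic ℓ)
  adj : ∀ i < ℓ, G.Adj (p i) (p (i + 1))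
  degree_eq_two : ∀ i ∈ Set.Ioo 0 ℓ, G.degree (p i) = 2

namespace IsThreadPath

variable {V : Type*} [Fintype V] {G : SimpleGraph V} [DecidableRel G.Adj] {ℓ : ℕ}
  {p : ℕ → V}

lemma pathOn_le (hP : IsThreadPath G ℓ p) : pathOn ℓ p ≤ G := by
  intro a b hab
  obtain ⟨⟨i, hi, heq⟩, -⟩ := pathOn_adj.1 hab
  rcases Sym2.eq_iff.1 heq with ⟨rfl, rfl⟩ | ⟨rfl, rfl⟩
  exacts [hP.adj i hi, (hP.adj i hi).symm]

lemma left_ne_right (hP : IsThreadPath G ℓ p) : p 0 ≠ p ℓ := fun h =>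
  hP.pos.ne (hP.injOn (Set.mem_Iic.2 (Nat.zero_le ℓ)) (Set.mem_Iic.2 le_rfl) h)

lemma left_notMem_interior (hP : IsThreadPath G ℓ p) : p 0 ∉ p '' Set.Ioo 0 ℓ := by
  rintro ⟨i, hi, h⟩
  exact hi.1.ne' (hP.injOn (Set.mem_Iic.2 hi.2.le) (Set.mem_Iic.2 (Nat.zero_le ℓ)) h)

lemma right_notMem_interior (hP : IsThreadPath G ℓ p) : p ℓ ∉ p '' Set.Ioo 0 ℓ := by
  rintro ⟨i, hi, h⟩
  exact hi.2.ne (hP.injOn (Set.mem_Iic.2 hi.2.le) (Set.mem_Iic.2 le_rfl) h)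

/-- The two path edges at an internal vertex already account for its degree. -/
lemma pathOn_adj_of_mem_interior [DecidableEq V] (hP : IsThreadPath G ℓ p) {a b : V}
    (hab : G.Adj a b) (ha : a ∈ p '' Set.Ioo 0 ℓ) : (pathOn ℓ p).Adj a b := by
  obtain ⟨i, ⟨hi0, hiℓ⟩, rfl⟩ := ha
  have hprev : G.Adj (p i) (p (i - 1)) := by
    simpa [Nat.sub_add_cancel hi0] using (hP.adj (i - 1) (by omega)).symm
  have hnext : G.Adj (p i) (p (i + 1)) := hP.adj i hiℓ
  have hne : p (i - 1) ≠ p (i + 1) := fun h => by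
    have := hP.injOn (Set.mem_Iic.2 (by omega)) (Set.mem_Iic.2 (by omega)) h
    omega
  have hnbrs : ({p (i - 1), p (i + 1)} : Finset V) = G.neighborFinset (p i) := by
    refine Finset.eq_of_subset_of_card_le (by simp [Finset.insert_subset_iff, hprev, hnext]) ?_
    rw [SimpleGraph.card_neighborFinset_eq_degree, hP.degree_eq_two i ⟨hi0, hiℓ⟩,
      Finset.card_pair hne]
  have hb : b ∈ ({p (i - 1), p (i + 1)} : Finset V) := by simpa [hnbrs] using hab
  rcases Finset.mem_insert.1 hb with rfl | hb
  · exact pathOn_adj.2 ⟨⟨i - 1, by omega, by rw [Nat.sub_add_cancel hi0, Sym2.eq_swap]⟩,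
      hab.ne⟩
  · exact pathOn_adj.2 ⟨⟨i, hiℓ, by rw [Finset.mem_singleton.1 hb]⟩, hab.ne⟩

lemma mem_edgeSet_pathOn_of_mem_interior [DecidableEq V] (hP : IsThreadPath G ℓ p)
    {e : Sym2 V} (he : e ∈ G.edgeSet) {x : V} (hxe : x ∈ e) (hx : x ∈ p '' Set.Ioo 0 ℓ) :
    e ∈ (pathOn ℓ p).edgeSet := by
  induction e using Sym2.ind with
  | _ a b =>
    rcases Sym2.mem_iff.1 hxe with rfl | rfl
    · exact hP.pathOn_adj_of_mem_interior he hx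
    · exact (hP.pathOn_adj_of_mem_interior (G.adj_symm he) hx).symm

end IsThreadPath

noncomputable def pathReducedWeight {V : Type*} [DecidableEq V] (G : SimpleGraph V)
    [DecidableRel G.Adj] (w : Sym2 V → ℕ) (ℓ : ℕ) (p : ℕ → V) (e : Sym2 (Option V)) : ℕ :=
  if e = s(some (p 0), (none : Option V)) then
    wmax (deleteVerts (pathOn ℓ p) {p ℓ}) w - wmax (deleteVerts (pathOn ℓ p) {p 0, p ℓ}) w
  else if e = s(some (p ℓ), (none : Option V)) then
    wmax (deleteVerts (pathOn ℓ p) {p 0}) w - wmax (deleteVerts (pathOn ℓ p) {p 0, p ℓ}) w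
  else if e = s(some (p 0), some (p ℓ)) then
    max (if G.Adj (p 0) (p ℓ) then w s(p 0, p ℓ) else 0)
      (wmax (pathOn ℓ p) w - wmax (deleteVerts (pathOn ℓ p) {p 0, p ℓ}) w)
  else if (none : Option V) ∈ e then 0
  else w (e.map fun o => o.getD (p 0))

section Reduced

variable {V : Type*} {G : SimpleGraph V} {ℓ : ℕ} {p : ℕ → V}

lemma pathReduced_adj_some {a b : V} :
    (pathReduced G ℓ p).Adj (some a) (some b) ↔ a ≠ b ∧ a ∉ p '' Set.Ioo 0 ℓ ∧
      b ∉ p '' Set.Ioo 0 ℓ ∧ (G.Adj a b ∨ s(a, b) = s(p 0, p ℓ)) := by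
  simp [pathReduced]

lemma pathReduced_eq_of_none_mem {e : Sym2 (Option V)} (he : e ∈ (pathReduced G ℓ p).edgeSet)
    (hz : none ∈ e) : e = s(some (p 0), none) ∨ e = s(some (p ℓ), none) := by
  induction e using Sym2.ind with
  | _ x y =>
    rcases x with _ | a <;> rcases y with _ | b
    · exact he.elim
    · rcases (he : b = p 0 ∨ b = p ℓ) with rfl | rfl <;> simp [Sym2.eq_swap]
    · rcases (he : a = p 0 ∨ a = p ℓ) with rfl | rfl <;> simp
    · simp at hz

lemma eq_of_isMatching_pathReduced_of_special {D : Finset (Sym2 (Option V))}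
    (hD : IsMatching (pathReduced G ℓ p) D)
    (hspecial : ∀ e ∈ D, none ∈ e ∨ e = s(some (p 0), some (p ℓ))) :
    D = ∅ ∨ D = {s(some (p 0), none)} ∨ D = {s(some (p ℓ), none)} ∨
      D = {s(some (p 0), some (p ℓ))} := by
  have hthree : ∀ e ∈ D, e = s(some (p 0), none) ∨ e = s(some (p ℓ), none) ∨
      e = s(some (p 0), some (p ℓ)) := fun e he =>
    (hspecial e he).elim (fun hz => (pathReduced_eq_of_none_mem (hD.1 e he) hz).elim
      Or.inl (Or.inr ∘ Or.inl)) (Or.inr ∘ Or.inr)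
  -- any two of the three special edges share a vertex
  have hunique : ∀ e ∈ D, ∀ f ∈ D, f = e := by
    intro e he f hf
    by_contra hne
    obtain ⟨x, hxf, hxe⟩ : ∃ x, x ∈ f ∧ x ∈ e := by
      rcases hthree e he with rfl | rfl | rfl <;> rcases hthree f hf with rfl | rfl | rfl <;>
        first
        | exact ⟨none, Sym2.mem_mk_right _ _, Sym2.mem_mk_right _ _⟩
        | exact ⟨some (p 0), Sym2.mem_mk_left _ _, Sym2.mem_mk_left _ _⟩
        | exact ⟨some (p ℓ), Sym2.mem_mk_left _ _, Sym2.mem_mk_right _ _⟩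
        | exact ⟨some (p ℓ), Sym2.mem_mk_right _ _, Sym2.mem_mk_left _ _⟩
    exact hD.2 f hf e he hne x hxf hxe
  rcases D.eq_empty_or_nonempty with rfl | ⟨e, he⟩
  · exact Or.inl rfl
  · rw [Finset.eq_singleton_iff_unique_mem.2 ⟨he, hunique e he⟩]
    rcases hthree e he with rfl | rfl | rfl <;> simp

lemma exists_map_some_eq {e : Sym2 (Option V)} (hz : none ∉ e) :
    ∃ e' : Sym2 V, e'.map some = e := by
  induction e using Sym2.ind with
  | _ x y =>
    rcases x with _ | a <;> rcases y with _ | b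
    · simp at hz
    · simp at hz
    · simp at hz
    · exact ⟨s(a, b), rfl⟩

variable [DecidableEq V]

lemma isMatching_pathReduced_image_some {M : Finset (Sym2 V)} (hM : IsMatching G M)
    (hI : Disjoint (edgeVerts M) (p '' Set.Ioo 0 ℓ)) :
    IsMatching (pathReduced G ℓ p) (M.image (Sym2.map some)) := by
  refine hM.image (Option.some_injective V) fun e he => ?_
  induction e using Sym2.ind with
  | _ a b =>
    exact pathReduced_adj_some.2 ⟨(hM.1 _ he).ne,
      Set.disjoint_left.1 hI ⟨_, he, Sym2.mem_mk_left a b⟩,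
      Set.disjoint_left.1 hI ⟨_, he, Sym2.mem_mk_right a b⟩, Or.inl (hM.1 _ he)⟩

variable [DecidableRel G.Adj] (w : Sym2 V → ℕ)

lemma pathReducedWeight_left :
    pathReducedWeight G w ℓ p s(some (p 0), none) =
      wmax (deleteVerts (pathOn ℓ p) {p ℓ}) w - wmax (deleteVerts (pathOn ℓ p) {p 0, p ℓ}) w := by
  simp [pathReducedWeight]

lemma pathReducedWeight_right (huv : p 0 ≠ p ℓ) :
    pathReducedWeight G w ℓ p s(some (p ℓ), none) =
      wmax (deleteVerts (pathOn ℓ p) {p 0}) w - wmax (deleteVerts (pathOn ℓ p) {p 0, p ℓ}) w := by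
  simp [pathReducedWeight, huv.symm]

lemma pathReducedWeight_left_right :
    pathReducedWeight G w ℓ p s(some (p 0), some (p ℓ)) =
      max (if G.Adj (p 0) (p ℓ) then w s(p 0, p ℓ) else 0)
        (wmax (pathOn ℓ p) w - wmax (deleteVerts (pathOn ℓ p) {p 0, p ℓ}) w) := by
  simp [pathReducedWeight]

lemma pathReducedWeight_some {a b : V} (hab : s(a, b) ≠ s(p 0, p ℓ)) :
    pathReducedWeight G w ℓ p s(some a, some b) = w s(a, b) := by
  have hab' : s(some a, some b) ≠ s(some (p 0), some (p ℓ)) := by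
    simpa [Sym2.eq_iff] using hab
  simp [pathReducedWeight, hab']

lemma le_pathReducedWeight_some {a b : V} (hab : G.Adj a b) :
    w s(a, b) ≤ pathReducedWeight G w ℓ p s(some a, some b) := by
  by_cases h : s(a, b) = s(p 0, p ℓ)
  · have huv : G.Adj (p 0) (p ℓ) := by rwa [← SimpleGraph.mem_edgeSet, ← h]
    have h' : s(some a, some b) = s(some (p 0), some (p ℓ)) := by
      simpa using congrArg (Sym2.map some) h
    rw [h', pathReducedWeight_left_right, if_pos huv, h]
    exact le_max_left _ _
  · rw [pathReducedWeight_some w h]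

lemma pathReducedWeight_left_right_le :
    pathReducedWeight G w ℓ p s(some (p 0), some (p ℓ)) ≤
        wmax (pathOn ℓ p) w - wmax (deleteVerts (pathOn ℓ p) {p 0, p ℓ}) w ∨
      G.Adj (p 0) (p ℓ) ∧ pathReducedWeight G w ℓ p s(some (p 0), some (p ℓ)) ≤ w s(p 0, p ℓ) := by
  rw [pathReducedWeight_left_right]
  split_ifs with huv
  · rcases le_total (w s(p 0, p ℓ)) (wmax (pathOn ℓ p) w -
      wmax (deleteVerts (pathOn ℓ p) {p 0, p ℓ}) w) with hle | hle
    · exact Or.inl (max_le hle le_rfl)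
    · exact Or.inr ⟨huv, max_le le_rfl hle⟩
  · exact Or.inl (max_le (Nat.zero_le _) le_rfl)

lemma sum_le_sum_pathReducedWeight_image_some {M : Finset (Sym2 V)}
    (hM : ∀ e ∈ M, e ∈ G.edgeSet) :
    ∑ e ∈ M, w e ≤ ∑ e ∈ M.image (Sym2.map some), pathReducedWeight G w ℓ p e := by
  rw [Finset.sum_image fun _ _ _ _ h => Sym2.map.injective (Option.some_injective V) h]
  refine Finset.sum_le_sum fun e he => ?_
  induction e using Sym2.ind with
  | _ a b => exact le_pathReducedWeight_some w (hM _ he)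

lemma exists_isMatching_of_pathReduced {R : Finset (Sym2 (Option V))}
    (hR : IsMatching (pathReduced G ℓ p) R)
    (hord : ∀ e ∈ R, none ∉ e ∧ e ≠ s(some (p 0), some (p ℓ))) :
    ∃ N, IsMatching G N ∧ Disjoint (edgeVerts N) (p '' Set.Ioo 0 ℓ) ∧
      some '' edgeVerts N ⊆ edgeVerts R ∧
      ∑ e ∈ N, w e = ∑ e ∈ R, pathReducedWeight G w ℓ p e := by
  have hdown : ∀ e : Sym2 V, e.map some ∈ R → e ∈ G.edgeSet ∧
      (∀ x ∈ e, x ∉ p '' Set.Ioo 0 ℓ) ∧ pathReducedWeight G w ℓ p (e.map some) = w e := by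
    intro e he
    induction e using Sym2.ind with
    | _ a b =>
      have huv : s(a, b) ≠ s(p 0, p ℓ) := fun h => (hord _ he).2 (by rw [h]; rfl)
      obtain ⟨-, ha, hb, hab | hab⟩ := pathReduced_adj_some.1 (hR.1 _ he)
      swap
      · exact absurd hab huv
      refine ⟨hab, fun x hx => ?_, pathReducedWeight_some w huv⟩
      rcases Sym2.mem_iff.1 hx with rfl | rfl <;> assumption
  have hinj : Function.Injective (Sym2.map (some : V → Option V)) :=
    Sym2.map.injective (Option.some_injective V)
  refine ⟨R.preimage (Sym2.map some) hinj.injOn,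
    hR.preimage (Option.some_injective V) fun e he => (hdown e he).1,
    Set.disjoint_left.2 fun x ⟨e, he, hxe⟩ => (hdown e (Finset.mem_preimage.1 he)).2.1 x hxe,
    ?_, ?_⟩
  · rintro _ ⟨x, ⟨e, he, hxe⟩, rfl⟩
    exact ⟨_, Finset.mem_preimage.1 he, Sym2.mem_map.2 ⟨x, hxe, rfl⟩⟩
  · rw [← Finset.sum_preimage _ R hinj.injOn _ fun e he hrange =>
      absurd (exists_map_some_eq (hord e he).1) hrange]
    exact Finset.sum_congr rfl fun e he => (hdown e (Finset.mem_preimage.1 he)).2.2.symm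

end Reduced

namespace IsThreadPath

variable {V : Type*} [Fintype V] [DecidableEq V] {G : SimpleGraph V} [DecidableRel G.Adj]
  {ℓ : ℕ} {p : ℕ → V} (w : Sym2 V → ℕ)

lemma exists_isMatching_pathReduced (hP : IsThreadPath G ℓ p) {N : Finset (Sym2 V)}
    (hN : IsMatching (pathOn ℓ p) N) :
    ∃ D, IsMatching (pathReduced G ℓ p) D ∧ edgeVerts D ⊆ insert none (some '' edgeVerts N) ∧
      ∑ e ∈ N, w e ≤
        wmax (deleteVerts (pathOn ℓ p) {p 0, p ℓ}) w + ∑ e ∈ D, pathReducedWeight G w ℓ p e := by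
  have huz : s(some (p 0), none) ∈ (pathReduced G ℓ p).edgeSet := Or.inl rfl
  have hvz : s(some (p ℓ), none) ∈ (pathReduced G ℓ p).edgeSet := Or.inr rfl
  have huv : s(some (p 0), some (p ℓ)) ∈ (pathReduced G ℓ p).edgeSet :=
    pathReduced_adj_some.2 ⟨hP.left_ne_right, hP.left_notMem_interior,
      hP.right_notMem_interior, Or.inr rfl⟩
  by_cases hu : p 0 ∈ edgeVerts N <;> by_cases hv : p ℓ ∈ edgeVerts N
  · refine ⟨{s(some (p 0), some (p ℓ))}, .singleton huv, by simp [Set.insert_subset_iff, hu, hv],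
      ?_⟩
    rw [Finset.sum_singleton, pathReducedWeight_left_right]
    exact (le_wmax hN).trans (le_add_tsub.trans (Nat.add_le_add_left (le_max_right _ _) _))
  · refine ⟨{s(some (p 0), none)}, .singleton huz, by simp [Set.insert_subset_iff, hu], ?_⟩
    rw [Finset.sum_singleton, pathReducedWeight_left]
    exact (le_wmax (hN.deleteVerts (Set.disjoint_singleton_right.2 hv))).trans le_add_tsub
  · refine ⟨{s(some (p ℓ), none)}, .singleton hvz, by simp [Set.insert_subset_iff, hv], ?_⟩
    rw [Finset.sum_singleton, pathReducedWeight_right w hP.left_ne_right]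
    exact (le_wmax (hN.deleteVerts (Set.disjoint_singleton_right.2 hu))).trans le_add_tsub
  · refine ⟨∅, isMatching_empty _, by simp, ?_⟩
    rw [Finset.sum_empty, add_zero]
    exact le_wmax (hN.deleteVerts (by simp [Set.disjoint_insert_right, hu, hv]))

lemma exists_isMatching_of_left_right (hP : IsThreadPath G ℓ p) :
    ∃ N, IsMatching G N ∧ (∀ x ∈ edgeVerts N, x ∈ p '' Set.Ioo 0 ℓ ∨ x = p 0 ∨ x = p ℓ) ∧
      pathReducedWeight G w ℓ p s(some (p 0), some (p ℓ)) +
        wmax (deleteVerts (pathOn ℓ p) {p 0, p ℓ}) w ≤ ∑ e ∈ N, w e := by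
  rcases pathReducedWeight_left_right_le (G := G) (ℓ := ℓ) (p := p) w with h | ⟨hadj, h⟩
  · obtain ⟨N, hN, hNw⟩ := exists_wmax (pathOn ℓ p) w
    have hle : wmax (deleteVerts (pathOn ℓ p) {p 0, p ℓ}) w ≤ wmax (pathOn ℓ p) w :=
      wmax_mono (deleteVerts_le _ _)
    exact ⟨N, hN.mono hP.pathOn_le,
      fun x hx => mem_interior_or_eq_endpoint_of_isMatching_pathOn hN hx, by omega⟩
  · obtain ⟨N, hN, hNw⟩ := exists_wmax (deleteVerts (pathOn ℓ p) {p 0, p ℓ}) w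
    have hNP : IsMatching (pathOn ℓ p) N := hN.mono (deleteVerts_le _ _)
    have huv : Disjoint (edgeVerts {s(p 0, p ℓ)}) (edgeVerts N) := by
      rw [edgeVerts_singleton]
      exact hN.disjoint_of_deleteVerts.symm
    refine ⟨{s(p 0, p ℓ)} ∪ N, (IsMatching.singleton hadj).union (hNP.mono hP.pathOn_le) huv,
      fun x ⟨e, he, hxe⟩ => ?_, ?_⟩
    · rcases Finset.mem_union.1 he with he | he
      · rw [Finset.mem_singleton.1 he, Sym2.mem_iff] at hxe
        exact Or.inr hxe
      · exact mem_interior_or_eq_endpoint_of_isMatching_pathOn hNP ⟨e, he, hxe⟩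
    · rw [Finset.sum_union (disjoint_of_disjoint_edgeVerts huv), Finset.sum_singleton, hNw]
      omega

lemma exists_isMatching_of_special (hP : IsThreadPath G ℓ p) {D : Finset (Sym2 (Option V))}
    (hD : IsMatching (pathReduced G ℓ p) D)
    (hspecial : ∀ e ∈ D, none ∈ e ∨ e = s(some (p 0), some (p ℓ))) :
    ∃ N, IsMatching G N ∧ (∀ x ∈ edgeVerts N, x ∈ p '' Set.Ioo 0 ℓ ∨ some x ∈ edgeVerts D) ∧
      ∑ e ∈ D, pathReducedWeight G w ℓ p e + wmax (deleteVerts (pathOn ℓ p) {p 0, p ℓ}) w ≤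
        ∑ e ∈ N, w e := by
  have hmono : ∀ {S : Set V}, S ⊆ {p 0, p ℓ} →
      wmax (deleteVerts (pathOn ℓ p) {p 0, p ℓ}) w ≤ wmax (deleteVerts (pathOn ℓ p) S) w :=
    fun hS => wmax_mono (deleteVerts_anti _ hS)
  rcases eq_of_isMatching_pathReduced_of_special hD hspecial with rfl | rfl | rfl | rfl
  · obtain ⟨N, hN, hNw⟩ := exists_wmax (deleteVerts (pathOn ℓ p) {p 0, p ℓ}) w
    have hNP : IsMatching (pathOn ℓ p) N := hN.mono (deleteVerts_le _ _)
    refine ⟨N, hNP.mono hP.pathOn_le, fun x hx => ?_, by simp [hNw]⟩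
    rcases mem_interior_or_eq_endpoint_of_isMatching_pathOn hNP hx with h | rfl | rfl
    exacts [Or.inl h, (Set.disjoint_left.1 hN.disjoint_of_deleteVerts hx (by simp)).elim,
      (Set.disjoint_left.1 hN.disjoint_of_deleteVerts hx (by simp)).elim]
  · obtain ⟨N, hN, hNw⟩ := exists_wmax (deleteVerts (pathOn ℓ p) {p ℓ}) w
    have hNP : IsMatching (pathOn ℓ p) N := hN.mono (deleteVerts_le _ _)
    refine ⟨N, hNP.mono hP.pathOn_le, fun x hx => ?_, ?_⟩
    · rcases mem_interior_or_eq_endpoint_of_isMatching_pathOn hNP hx with h | rfl | rfl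
      exacts [Or.inl h, Or.inr (by simp),
        (Set.disjoint_left.1 hN.disjoint_of_deleteVerts hx rfl).elim]
    · rw [Finset.sum_singleton, pathReducedWeight_left, Nat.sub_add_cancel (hmono (by simp)), hNw]
  · obtain ⟨N, hN, hNw⟩ := exists_wmax (deleteVerts (pathOn ℓ p) {p 0}) w
    have hNP : IsMatching (pathOn ℓ p) N := hN.mono (deleteVerts_le _ _)
    refine ⟨N, hNP.mono hP.pathOn_le, fun x hx => ?_, ?_⟩
    · rcases mem_interior_or_eq_endpoint_of_isMatching_pathOn hNP hx with h | rfl | rfl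
      exacts [Or.inl h, (Set.disjoint_left.1 hN.disjoint_of_deleteVerts hx rfl).elim,
        Or.inr (by simp)]
    · rw [Finset.sum_singleton, pathReducedWeight_right w hP.left_ne_right,
        Nat.sub_add_cancel (hmono (by simp)), hNw]
  · obtain ⟨N, hN, hNverts, hNw⟩ := hP.exists_isMatching_of_left_right w
    refine ⟨N, hN, fun x hx => ?_, by rwa [Finset.sum_singleton]⟩
    rcases hNverts x hx with h | rfl | rfl
    exacts [Or.inl h, Or.inr (by simp), Or.inr (by simp)]

lemma wmax_le_wmax_pathReduced_add (hP : IsThreadPath G ℓ p) :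
    wmax G w ≤ wmax (pathReduced G ℓ p) (pathReducedWeight G w ℓ p) +
      wmax (deleteVerts (pathOn ℓ p) {p 0, p ℓ}) w := by
  classical
  obtain ⟨M, hM, hMw⟩ := exists_wmax G w
  set I := p '' Set.Ioo 0 ℓ
  set M₁ := M.filter fun e => ∃ x ∈ e, x ∈ I
  set M₂ := M.filter fun e => ¬∃ x ∈ e, x ∈ I
  have hM₁ : IsMatching (pathOn ℓ p) M₁ := by
    refine ⟨fun e he => ?_, (hM.subset (Finset.filter_subset _ _)).2⟩
    obtain ⟨heM, x, hxe, hx⟩ := Finset.mem_filter.1 he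
    exact hP.mem_edgeSet_pathOn_of_mem_interior (hM.1 e heM) hxe hx
  have hM₂I : Disjoint (edgeVerts M₂) I :=
    Set.disjoint_left.2 fun x ⟨e, he, hxe⟩ hx => (Finset.mem_filter.1 he).2 ⟨x, hxe, hx⟩
  have hM₁₂ : Disjoint (edgeVerts M₁) (edgeVerts M₂) :=
    hM.disjoint_edgeVerts (Finset.filter_subset _ _) (Finset.filter_subset _ _)
      (Finset.disjoint_filter_filter_not _ _ _)
  obtain ⟨D, hD, hDverts, hDw⟩ := hP.exists_isMatching_pathReduced w hM₁
  set L := M₂.image (Sym2.map some)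
  have hL : IsMatching (pathReduced G ℓ p) L :=
    isMatching_pathReduced_image_some (hM.subset (Finset.filter_subset _ _)) hM₂I
  have hDL : Disjoint (edgeVerts D) (edgeVerts L) := by
    rw [edgeVerts_image]
    refine Set.disjoint_left.2 fun y hyD ⟨x, hx₂, hxy⟩ => ?_
    rcases hDverts hyD with rfl | ⟨x', hx₁, rfl⟩
    · exact Option.some_ne_none x hxy
    · exact Set.disjoint_left.1 hM₁₂ hx₁ (Option.some_injective V hxy ▸ hx₂)
  calc wmax G w = ∑ e ∈ M₁, w e + ∑ e ∈ M₂, w e := by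
        rw [← hMw, Finset.sum_filter_add_sum_filter_not]
    _ ≤ (wmax (deleteVerts (pathOn ℓ p) {p 0, p ℓ}) w + ∑ e ∈ D, pathReducedWeight G w ℓ p e) +
        ∑ e ∈ L, pathReducedWeight G w ℓ p e :=
      add_le_add hDw (sum_le_sum_pathReducedWeight_image_some w fun e he =>
        hM.1 e (Finset.filter_subset _ _ he))
    _ = ∑ e ∈ D ∪ L, pathReducedWeight G w ℓ p e +
        wmax (deleteVerts (pathOn ℓ p) {p 0, p ℓ}) w := by
      rw [Finset.sum_union (disjoint_of_disjoint_edgeVerts hDL)]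
      ring
    _ ≤ _ := Nat.add_le_add_right (le_wmax (hD.union hL hDL)) _

lemma wmax_pathReduced_add_le (hP : IsThreadPath G ℓ p) :
    wmax (pathReduced G ℓ p) (pathReducedWeight G w ℓ p) +
      wmax (deleteVerts (pathOn ℓ p) {p 0, p ℓ}) w ≤ wmax G w := by
  obtain ⟨M, hM, hMw⟩ := exists_wmax (pathReduced G ℓ p) (pathReducedWeight G w ℓ p)
  set D := M.filter fun e => none ∈ e ∨ e = s(some (p 0), some (p ℓ))
  set R := M.filter fun e => ¬(none ∈ e ∨ e = s(some (p 0), some (p ℓ)))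
  obtain ⟨N, hN, hNverts, hNw⟩ := hP.exists_isMatching_of_special w
    (hM.subset (Finset.filter_subset _ _)) fun e he => (Finset.mem_filter.1 he).2
  obtain ⟨N', hN', hN'I, hN'verts, hN'w⟩ := exists_isMatching_of_pathReduced w
    (hM.subset (Finset.filter_subset _ _)) fun e he => not_or.1 (Finset.mem_filter.1 he).2
  have hDR : Disjoint (edgeVerts D) (edgeVerts R) :=
    hM.disjoint_edgeVerts (Finset.filter_subset _ _) (Finset.filter_subset _ _)
      (Finset.disjoint_filter_filter_not _ _ _)
  have hN'N : Disjoint (edgeVerts N') (edgeVerts N) := by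
    refine Set.disjoint_left.2 fun x hx' hx => (hNverts x hx).elim
      (Set.disjoint_left.1 hN'I hx') fun hxD => ?_
    exact Set.disjoint_left.1 hDR hxD (hN'verts ⟨x, hx', rfl⟩)
  calc wmax (pathReduced G ℓ p) (pathReducedWeight G w ℓ p) +
        wmax (deleteVerts (pathOn ℓ p) {p 0, p ℓ}) w =
        ∑ e ∈ R, pathReducedWeight G w ℓ p e + (∑ e ∈ D, pathReducedWeight G w ℓ p e +
          wmax (deleteVerts (pathOn ℓ p) {p 0, p ℓ}) w) := by
        rw [← hMw, ← Finset.sum_filter_add_sum_filter_not M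
          (fun e => none ∈ e ∨ e = s(some (p 0), some (p ℓ)))]
        ring
    _ ≤ ∑ e ∈ N', w e + ∑ e ∈ N, w e := hN'w ▸ Nat.add_le_add_left hNw _
    _ = ∑ e ∈ N' ∪ N, w e := (Finset.sum_union (disjoint_of_disjoint_edgeVerts hN'N)).symm
    _ ≤ wmax G w := le_wmax (hN'.union hN hN'N)

theorem wmax_pathReduced (hP : IsThreadPath G ℓ p) :
    wmax (pathReduced G ℓ p) (pathReducedWeight G w ℓ p) =
      wmax G w - wmax (deleteVerts (pathOn ℓ p) {p 0, p ℓ}) w :=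
  Nat.eq_sub_of_add_eq
    ((hP.wmax_pathReduced_add_le w).antisymm (hP.wmax_le_wmax_pathReduced_add w))

end IsThreadPath

theorem stmt11_general {V : Type*} [Fintype V] [DecidableEq V] (G : SimpleGraph V)
    [DecidableRel G.Adj] (w : Sym2 V → ℕ)
    (ℓ : ℕ) (hℓ : 3 ≤ ℓ) (p : ℕ → V)
    (hinj : ∀ i ≤ ℓ, ∀ j ≤ ℓ, p i = p j → i = j)
    (hsub : ∀ i < ℓ, G.Adj (p i) (p (i + 1)))
    (hdeg2 : ∀ i, 0 < i → i < ℓ → G.degree (p i) = 2)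
    (wP wPu wPv wPuv : ℕ)
    (hwP : wP = wmax (pathOn ℓ p) w)
    (hwPu : wPu = wmax (deleteVerts (pathOn ℓ p) {p 0}) w)
    (hwPv : wPv = wmax (deleteVerts (pathOn ℓ p) {p ℓ}) w)
    (hwPuv : wPuv = wmax (deleteVerts (pathOn ℓ p) {p 0, p ℓ}) w) :
    wmax (pathReduced G ℓ p)
        (fun e =>
          if e = s(some (p 0), (none : Option V)) then wPv - wPuv
          else if e = s(some (p ℓ), (none : Option V)) then wPu - wPuv
          else if e = s(some (p 0), some (p ℓ)) then
            max (if G.Adj (p 0) (p ℓ) then w s(p 0, p ℓ) else 0) (wP - wPuv)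
          else if (none : Option V) ∈ e then 0
          else w (e.map fun o => o.getD (p 0))) =
      wmax G w - wPuv := by
  subst hwP hwPu hwPv hwPuv
  exact IsThreadPath.wmax_pathReduced w
    ⟨by omega, fun i hi j hj => hinj i hi j hj, hsub, fun i hi => hdeg2 i hi.1 hi.2⟩

/-- Maximal-path rule: let `P = p 0 p 1 … p ℓ` (with `ℓ ≥ 3`) be a maximal path of
`G` with endpoints `u = p 0` and `v = p ℓ`: internal vertices have degree 2 in `G`
and the endpoints do not. Let `G'` be obtained by deleting the internal vertices of
`P`, adding a fresh vertex `z` with edges `uz` of weight `ω(P-v) - ω(P-u-v)` and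
`vz` of weight `ω(P-u) - ω(P-u-v)`, and adding/setting the edge `uv` of weight
`max {ω(uv), ω(P) - ω(P-u-v)}` (where `ω(uv) = 0` if `uv ∉ E`). Then
`ω(G') = ω(G) - ω(P-u-v)`. -/
theorem stmt11 {V : Type*} [Fintype V] [DecidableEq V] (G : SimpleGraph V)
    [DecidableRel G.Adj] (w : Sym2 V → ℕ)
    (ℓ : ℕ) (hℓ : 3 ≤ ℓ) (p : ℕ → V)
    (hinj : ∀ i ≤ ℓ, ∀ j ≤ ℓ, p i = p j → i = j)
    (hsub : ∀ i < ℓ, G.Adj (p i) (p (i + 1)))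
    (hdeg2 : ∀ i, 0 < i → i < ℓ → G.degree (p i) = 2)
    (hdegu : G.degree (p 0) ≠ 2) (hdegv : G.degree (p ℓ) ≠ 2)
    (wP wPu wPv wPuv : ℕ)
    (hwP : wP = wmax (pathOn ℓ p) w)
    (hwPu : wPu = wmax (deleteVerts (pathOn ℓ p) {p 0}) w)
    (hwPv : wPv = wmax (deleteVerts (pathOn ℓ p) {p ℓ}) w)
    (hwPuv : wPuv = wmax (deleteVerts (pathOn ℓ p) {p 0, p ℓ}) w) :
    wmax (pathReduced G ℓ p)
        (fun e =>
          if e = s(some (p 0), (none : Option V)) then wPv - wPuv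
          else if e = s(some (p ℓ), (none : Option V)) then wPu - wPuv
          else if e = s(some (p 0), some (p ℓ)) then
            max (if G.Adj (p 0) (p ℓ) then w s(p 0, p ℓ) else 0) (wP - wPuv)
          else if (none : Option V) ∈ e then 0
          else w (e.map fun o => o.getD (p 0))) =
      wmax G w - wPuv :=
  stmt11_general G w ℓ hℓ p hinj hsub hdeg2 wP wPu wPv wPuv hwP hwPu hwPv hwPuv
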